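/- arXiv:1608.01651 — 7 statements merged into one kernel-verified Lean document; each statement's English description precedes it below -/
import Mathlib

section
/- Let γ : ℝ → ℝ × ℝ be a C² curve with γ′(θ) = r(θ)·p′(θ) for all θ, where r : ℝ → ℝ is the curvature radius of γ, and let h(θ) := [γ(θ), q(θ)] be its support function. Then h is C², and for all θ: γ(θ) = h(θ)·p(θ) + (h′(θ)/[q(θ), q′(θ)])·q(θ), and r(θ) = h(θ) + (1/[p(θ), p′(θ)])·(h′/[q, q′])′(θ). -/
open Real MeasureTheory
open scoped ContDiff

noncomputable section

/-- Determinant of two plane vectors: `[a, b] = a₁b₂ − a₂b₁`. -/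
def det2 (a b : ℝ × ℝ) : ℝ := a.1 * b.2 - a.2 * b.1

/-- The dual parameterization `q(θ) = p′(θ)/[p(θ), p′(θ)]`. -/
def dualQ (p : ℝ → ℝ × ℝ) : ℝ → ℝ × ℝ :=
  fun θ => (det2 (p θ) (deriv p θ))⁻¹ • deriv p θ

/-- `p` is a smooth, symmetric, quadratically convex parameterization of the
unit circle of a normed plane, by the angle its tangent makes with a fixed direction. -/
def IsUnitCircle (p : ℝ → ℝ × ℝ) : Prop :=
  ContDiff ℝ (⊤ : ℕ∞) p ∧ (∀ θ, p (θ + π) = -p θ) ∧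
  (∀ θ, 0 < det2 (p θ) (deriv p θ)) ∧
  (∀ θ, 0 < det2 (deriv p θ) (deriv (deriv p) θ))

/-- `u` is a solution of the cycloid equation
`(1/[p,p'])·(u'/[q,q'])' = −λ·u` for the normed plane with unit circle `p`. -/
def IsCycloidSol (p : ℝ → ℝ × ℝ) (lam : ℝ) (u : ℝ → ℝ) : Prop :=
  ContDiff ℝ 2 u ∧
  ∀ θ, (det2 (p θ) (deriv p θ))⁻¹ *
      deriv (fun t => deriv u t / det2 (dualQ p t) (deriv (dualQ p) t)) θ = -lam * u θ

lemma hasDerivAt_fst' {f : ℝ → ℝ × ℝ} {f' : ℝ × ℝ} {x : ℝ} (hf : HasDerivAt f f' x) :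
    HasDerivAt (fun t => (f t).1) f'.1 x := by
  simpa using hf.hasFDerivAt.fst.hasDerivAt

lemma hasDerivAt_snd' {f : ℝ → ℝ × ℝ} {f' : ℝ × ℝ} {x : ℝ} (hf : HasDerivAt f f' x) :
    HasDerivAt (fun t => (f t).2) f'.2 x := by
  simpa using hf.hasFDerivAt.snd.hasDerivAt

lemma det2_hasDerivAt {f g : ℝ → ℝ × ℝ} {f' g' : ℝ × ℝ} {x : ℝ}
    (hf : HasDerivAt f f' x) (hg : HasDerivAt g g' x) :
    HasDerivAt (fun t => det2 (f t) (g t)) (det2 f' (g x) + det2 (f x) g') x := by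
  have H := ((hasDerivAt_fst' hf).mul (hasDerivAt_snd' hg)).sub
    ((hasDerivAt_snd' hf).mul (hasDerivAt_fst' hg))
  exact H.congr_deriv (by unfold det2; ring)

lemma det2_contDiff {n : WithTop ℕ∞} {f g : ℝ → ℝ × ℝ}
    (hf : ContDiff ℝ n f) (hg : ContDiff ℝ n g) :
    ContDiff ℝ n (fun t => det2 (f t) (g t)) :=
  (hf.fst.mul hg.snd).sub (hf.snd.mul hg.fst)

/-- the support function `h = [γ, q]` is C², the curve is recovered as
`γ = h·p + (h'/[q,q'])·q`, and the curvature radius is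
`r = h + (1/[p,p'])·(h'/[q,q'])'`. -/
theorem stmt_1 (p : ℝ → ℝ × ℝ) (hP : IsUnitCircle p)
    (γ : ℝ → ℝ × ℝ) (r : ℝ → ℝ) (hγ : ContDiff ℝ 2 γ)
    (hder : ∀ θ, deriv γ θ = r θ • deriv p θ)
    (h : ℝ → ℝ) (hdef : ∀ θ, h θ = det2 (γ θ) (dualQ p θ)) :
    ContDiff ℝ 2 h ∧
    (∀ θ, γ θ = h θ • p θ +
      (deriv h θ / det2 (dualQ p θ) (deriv (dualQ p) θ)) • dualQ p θ) ∧
    (∀ θ, r θ = h θ + (det2 (p θ) (deriv p θ))⁻¹ *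
      deriv (fun t => deriv h t / det2 (dualQ p t) (deriv (dualQ p) t)) θ) := by
  obtain ⟨hp0, _hsym, hDpos, hKpos⟩ := hP
  have hp : ContDiff ℝ ∞ p := hp0.of_le (by simp)
  have hdp : ContDiff ℝ ∞ (deriv p) := (contDiff_infty_iff_deriv.mp hp).2
  have hddp : ContDiff ℝ ∞ (deriv (deriv p)) := (contDiff_infty_iff_deriv.mp hdp).2
  have hDc : ContDiff ℝ ∞ (fun θ => det2 (p θ) (deriv p θ)) := det2_contDiff hp hdp
  have hDne : ∀ θ, det2 (p θ) (deriv p θ) ≠ 0 := fun θ => (hDpos θ).ne'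
  have hqC : ContDiff ℝ ∞ (dualQ p) := (hDc.inv hDne).smul hdp
  have h1le : (1 : WithTop ℕ∞) ≤ ∞ := by norm_num
  -- pointwise derivatives
  have hpD : ∀ θ, HasDerivAt p (deriv p θ) θ :=
    fun θ => (hp.differentiable (by simp) θ).hasDerivAt
  have hdpD : ∀ θ, HasDerivAt (deriv p) (deriv (deriv p) θ) θ :=
    fun θ => (hdp.differentiable (by simp) θ).hasDerivAt
  have hγD : ∀ θ, HasDerivAt γ (deriv γ θ) θ :=
    fun θ => (hγ.differentiable two_ne_zero θ).hasDerivAt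
  have hqD : ∀ θ, HasDerivAt (dualQ p) (deriv (dualQ p) θ) θ :=
    fun θ => (hqC.differentiable (by simp) θ).hasDerivAt
  -- explicit derivative of q
  have hDD : ∀ θ, HasDerivAt (fun t => det2 (p t) (deriv p t))
      (det2 (deriv p θ) (deriv p θ) + det2 (p θ) (deriv (deriv p) θ)) θ :=
    fun θ => det2_hasDerivAt (hpD θ) (hdpD θ)
  have derivq : ∀ θ, deriv (dualQ p) θ =
      (det2 (p θ) (deriv p θ))⁻¹ • deriv (deriv p) θ +
      (-(det2 (deriv p θ) (deriv p θ) + det2 (p θ) (deriv (deriv p) θ)) /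
        (det2 (p θ) (deriv p θ)) ^ 2) • deriv p θ := by
    intro θ
    exact (((hDD θ).inv (hDne θ)).smul (hdpD θ)).deriv
  -- key determinant identities
  have pq1 : ∀ θ, det2 (p θ) (dualQ p θ) = 1 := by
    intro θ
    have hne := hDne θ
    simp only [dualQ, det2, Prod.smul_fst, Prod.smul_snd, smul_eq_mul] at *
    field_simp
  have pq'0 : ∀ θ, det2 (p θ) (deriv (dualQ p) θ) = 0 := by
    intro θ
    have hne := hDne θ
    rw [derivq θ]
    simp only [det2, Prod.fst_add, Prod.snd_add, Prod.smul_fst, Prod.smul_snd,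
      smul_eq_mul] at *
    field_simp
    ring
  have qq : ∀ θ, det2 (dualQ p θ) (deriv (dualQ p) θ) =
      (det2 (p θ) (deriv p θ))⁻¹ * (det2 (p θ) (deriv p θ))⁻¹ *
        det2 (deriv p θ) (deriv (deriv p) θ) := by
    intro θ
    rw [derivq θ]
    simp only [dualQ, det2, Prod.fst_add, Prod.snd_add, Prod.smul_fst, Prod.smul_snd,
      smul_eq_mul]
    ring
  have qqpos : ∀ θ, 0 < det2 (dualQ p θ) (deriv (dualQ p) θ) := by
    intro θ
    rw [qq θ]
    exact mul_pos (mul_pos (inv_pos.2 (hDpos θ)) (inv_pos.2 (hDpos θ))) (hKpos θ)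
  have qqne : ∀ θ, det2 (dualQ p θ) (deriv (dualQ p) θ) ≠ 0 := fun θ => (qqpos θ).ne'
  -- h as a function
  have hfun : h = fun θ => det2 (γ θ) (dualQ p θ) := funext hdef
  have hC : ContDiff ℝ 2 h := by
    rw [hfun]; exact det2_contDiff hγ (hqC.of_le (by rw [show ((2:WithTop ℕ∞)) = ((2:ℕ∞):WithTop ℕ∞) from rfl]; exact WithTop.coe_le_coe.mpr le_top))
  -- derivative of h
  have dh : ∀ θ, deriv h θ = det2 (γ θ) (deriv (dualQ p) θ) := by
    intro θ
    have H := (det2_hasDerivAt (hγD θ) (hqD θ)).deriv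
    rw [hfun, H, hder θ]
    have : det2 (r θ • deriv p θ) (dualQ p θ) = 0 := by
      simp only [dualQ, det2, Prod.smul_fst, Prod.smul_snd, smul_eq_mul]
      ring
    rw [this, zero_add]
  -- basis decomposition
  have basis : ∀ θ, γ θ = (det2 (γ θ) (dualQ p θ)) • p θ +
      (det2 (p θ) (γ θ)) • dualQ p θ := by
    intro θ
    have h1 := pq1 θ
    simp only [det2] at h1
    apply Prod.ext
    · simp only [det2, Prod.fst_add, Prod.smul_fst, smul_eq_mul]
      linear_combination (-(γ θ).1) * h1
    · simp only [det2, Prod.snd_add, Prod.smul_snd, smul_eq_mul]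
      linear_combination (-(γ θ).2) * h1
  -- the second coefficient
  have beta : ∀ θ, det2 (p θ) (γ θ) =
      deriv h θ / det2 (dualQ p θ) (deriv (dualQ p) θ) := by
    intro θ
    have e : det2 (γ θ) (deriv (dualQ p) θ) =
        det2 (p θ) (γ θ) * det2 (dualQ p θ) (deriv (dualQ p) θ) := by
      conv_lhs => rw [basis θ]
      have h0 := pq'0 θ
      simp only [det2] at h0 ⊢
      simp only [Prod.fst_add, Prod.snd_add, Prod.smul_fst, Prod.smul_snd, smul_eq_mul]
      linear_combination ((γ θ).1 * (dualQ p θ).2 - (γ θ).2 * (dualQ p θ).1) * h0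
    rw [dh θ, e, mul_div_assoc, div_self (qqne θ), mul_one]
  refine ⟨hC, fun θ => ?_, fun θ => ?_⟩
  · have hb := basis θ
    rw [← hdef θ, beta θ] at hb
    exact hb
  · -- curvature radius formula
    have hBfun : (fun t => deriv h t / det2 (dualQ p t) (deriv (dualQ p) t)) =
        fun t => det2 (p t) (γ t) := funext fun t => (beta t).symm
    have dB : deriv (fun t => deriv h t / det2 (dualQ p t) (deriv (dualQ p) t)) θ =
        det2 (deriv p θ) (γ θ) + det2 (p θ) (deriv γ θ) := by
      rw [hBfun]
      exact (det2_hasDerivAt (hpD θ) (hγD θ)).deriv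
    have e1 : det2 (deriv p θ) (γ θ) = -(det2 (p θ) (deriv p θ)) * h θ := by
      conv_lhs => rw [basis θ]
      rw [hdef θ]
      simp only [dualQ, det2, Prod.fst_add, Prod.snd_add, Prod.smul_fst, Prod.smul_snd,
        smul_eq_mul]
      ring
    have e2 : det2 (p θ) (deriv γ θ) = r θ * det2 (p θ) (deriv p θ) := by
      rw [hder θ]
      simp only [det2, Prod.smul_fst, Prod.smul_snd, smul_eq_mul]
      ring
    rw [dB, e1, e2]
    have hne := hDne θ
    field_simp
    ring
end
end

section
/- Let γ : ℝ → ℝ × ℝ be a C² curve with γ′(θ) = r(θ)·p′(θ) for all θ, let h(θ) := [γ(θ), q(θ)] be its support function, and define the evolute δ(θ) := γ(θ) − r(θ)·p(θ). Then for all θ: (i) the support function of δ with respect to the dual unit circle satisfies [δ(θ), p(θ)] = −h′(θ)/[q(θ), q′(θ)]; (ii) δ′(θ) = −r′(θ)·p(θ) = (r′(θ)/[q(θ), q′(θ)])·q′(θ), so the curvature radius of δ with respect to q is r_δ(θ) = r′(θ)/[q(θ), q′(θ)]. -/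
open Real MeasureTheory

noncomputable section

/-- the evolute `δ = γ - r·p` has support function
`[δ, p] = -h'/[q,q']` and satisfies `δ' = -r'·p = (r'/[q,q'])·q'`,
so its curvature radius is `r_δ = r'/[q,q']`. -/
theorem stmt_2 (p : ℝ → ℝ × ℝ) (hP : IsUnitCircle p)
    (γ : ℝ → ℝ × ℝ) (r : ℝ → ℝ) (hγ : ContDiff ℝ 2 γ)
    (hder : ∀ θ, deriv γ θ = r θ • deriv p θ)
    (h : ℝ → ℝ) (hdef : ∀ θ, h θ = det2 (γ θ) (dualQ p θ))
    (δ : ℝ → ℝ × ℝ) (hδ : ∀ θ, δ θ = γ θ - r θ • p θ) :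
    (∀ θ, det2 (δ θ) (p θ) = -(deriv h θ) / det2 (dualQ p θ) (deriv (dualQ p) θ)) ∧
    (∀ θ, deriv δ θ = -(deriv r θ) • p θ) ∧
    (∀ θ, deriv δ θ =
      (deriv r θ / det2 (dualQ p θ) (deriv (dualQ p) θ)) • deriv (dualQ p) θ) := by
  obtain ⟨hp, -, hDpos, hEpos⟩ := hP
  have hp2 : ContDiff ℝ ((1:ℕ)+1) p := by exact_mod_cast hp.of_le (WithTop.coe_le_coe.mpr le_top)
  have hg2 : ContDiff ℝ ((1:ℕ)+1) γ := by exact_mod_cast hγ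
  have hpdiff : Differentiable ℝ p := hp2.differentiable (by norm_num)
  have hp'diff : Differentiable ℝ (deriv p) :=
    ((contDiff_succ_iff_deriv.mp hp2).2.2).differentiable (by norm_num)
  have hγdiff : Differentiable ℝ γ := hg2.differentiable (by norm_num)
  have hγ'diff : Differentiable ℝ (deriv γ) :=
    ((contDiff_succ_iff_deriv.mp hg2).2.2).differentiable (by norm_num)
  -- pointwise reformulations
  have hqfun : dualQ p = fun t =>
      (((p t).1 * (deriv p t).2 - (p t).2 * (deriv p t).1)⁻¹ * (deriv p t).1,
       ((p t).1 * (deriv p t).2 - (p t).2 * (deriv p t).1)⁻¹ * (deriv p t).2) := by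
    funext t
    simp [dualQ, det2, Prod.ext_iff]
  have hhfun : h = fun t => (γ t).1 * (dualQ p t).2 - (γ t).2 * (dualQ p t).1 :=
    funext fun t => hdef t
  have hδfun : δ = fun t => γ t - r t • p t := funext hδ
  have hrfun : r = fun t =>
      ((p t).1 * (deriv γ t).2 - (p t).2 * (deriv γ t).1) /
      ((p t).1 * (deriv p t).2 - (p t).2 * (deriv p t).1) := by
    funext t
    have hD : (p t).1 * (deriv p t).2 - (p t).2 * (deriv p t).1 ≠ 0 := (hDpos t).ne'
    rw [hder t]
    simp only [Prod.smul_fst, Prod.smul_snd, smul_eq_mul]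
    field_simp
  have main : ∀ θ,
      (det2 (δ θ) (p θ) = -(deriv h θ) / det2 (dualQ p θ) (deriv (dualQ p) θ)) ∧
      (deriv δ θ = -(deriv r θ) • p θ) ∧
      (deriv δ θ =
        (deriv r θ / det2 (dualQ p θ) (deriv (dualQ p) θ)) • deriv (dualQ p) θ) := by
    intro θ
    have hDne : (p θ).1 * (deriv p θ).2 - (p θ).2 * (deriv p θ).1 ≠ 0 := (hDpos θ).ne'
    have hEne : (deriv p θ).1 * (deriv (deriv p) θ).2
        - (deriv p θ).2 * (deriv (deriv p) θ).1 ≠ 0 := (hEpos θ).ne'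
    have hpa : HasDerivAt p (deriv p θ) θ := (hpdiff θ).hasDerivAt
    have hpb : HasDerivAt (deriv p) (deriv (deriv p) θ) θ := (hp'diff θ).hasDerivAt
    have hga : HasDerivAt γ (r θ • deriv p θ) θ := by
      have := (hγdiff θ).hasDerivAt; rwa [hder θ] at this
    have hgb : HasDerivAt (deriv γ) (deriv (deriv γ) θ) θ := (hγ'diff θ).hasDerivAt
    -- derivative of D(t) = [p, p']
    have hp1 : HasDerivAt (fun t => (p t).1) (deriv p θ).1 θ := hpa.fst
    have hp2' : HasDerivAt (fun t => (p t).2) (deriv p θ).2 θ := hpa.snd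
    have hb1 : HasDerivAt (fun t => (deriv p t).1) (deriv (deriv p) θ).1 θ := hpb.fst
    have hb2 : HasDerivAt (fun t => (deriv p t).2) (deriv (deriv p) θ).2 θ := hpb.snd
    have hga1 : HasDerivAt (fun t => (γ t).1) (r θ • deriv p θ).1 θ := hga.fst
    have hga2 : HasDerivAt (fun t => (γ t).2) (r θ • deriv p θ).2 θ := hga.snd
    have hgb1 : HasDerivAt (fun t => (deriv γ t).1) (deriv (deriv γ) θ).1 θ := hgb.fst
    have hgb2 : HasDerivAt (fun t => (deriv γ t).2) (deriv (deriv γ) θ).2 θ := hgb.snd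
    have hD : HasDerivAt (fun t => (p t).1 * (deriv p t).2 - (p t).2 * (deriv p t).1) _ θ :=
      (hp1.mul hb2).sub (hp2'.mul hb1)
    have hDinv : HasDerivAt (fun t => ((p t).1 * (deriv p t).2 - (p t).2 * (deriv p t).1)⁻¹) _ θ := hD.inv hDne
    -- derivative of q
    have hq : HasDerivAt (fun t => (((p t).1 * (deriv p t).2 - (p t).2 * (deriv p t).1)⁻¹ * (deriv p t).1,
        ((p t).1 * (deriv p t).2 - (p t).2 * (deriv p t).1)⁻¹ * (deriv p t).2)) _ θ :=
      HasDerivAt.prodMk (hDinv.mul hb1) (hDinv.mul hb2)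
    rw [← hqfun] at hq
    -- derivative of h
    have hq1 := hq.fst
    have hq2 := hq.snd
    have hh : HasDerivAt (fun t => (γ t).1 * (dualQ p t).2 - (γ t).2 * (dualQ p t).1) _ θ :=
      (hga1.mul hq2).sub (hga2.mul hq1)
    rw [← hhfun] at hh
    -- derivative of r
    have hr : HasDerivAt (fun t => ((p t).1 * (deriv γ t).2 - (p t).2 * (deriv γ t).1) /
        ((p t).1 * (deriv p t).2 - (p t).2 * (deriv p t).1)) _ θ :=
      ((hp1.mul hgb2).sub (hp2'.mul hgb1)).div hD hDne
    rw [← hrfun] at hr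
    simp only [Pi.sub_apply, Pi.mul_apply] at hr
    -- derivative of δ
    have hδ' : HasDerivAt (fun t => γ t - r t • p t) _ θ := hga.sub (hr.smul hpa)
    rw [← hδfun] at hδ'
    -- components of deriv γ θ
    have hg1 : (deriv γ θ).1 = r θ * (deriv p θ).1 := by rw [hder θ]; simp
    have hg2' : (deriv γ θ).2 = r θ * (deriv p θ).2 := by rw [hder θ]; simp
    -- value of [q, q']
    have hK : det2 (dualQ p θ) (deriv (dualQ p) θ) =
        ((deriv p θ).1 * (deriv (deriv p) θ).2 - (deriv p θ).2 * (deriv (deriv p) θ).1) /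
        ((p θ).1 * (deriv p θ).2 - (p θ).2 * (deriv p θ).1) ^ 2 := by
      rw [hq.deriv, hqfun]
      simp only [det2]
      field_simp
      ring
    have hKne : det2 (dualQ p θ) (deriv (dualQ p) θ) ≠ 0 := by
      rw [hK]; exact div_ne_zero hEne (pow_ne_zero 2 hDne)
    refine ⟨?_, ?_, ?_⟩
    · rw [hh.deriv, hK, hδ θ, hqfun]
      simp only [det2, Prod.fst_sub, Prod.snd_sub, Prod.smul_fst, Prod.smul_snd, smul_eq_mul]
      field_simp
      ring
    · rw [hδ'.deriv, hr.deriv]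
      apply Prod.ext <;>
      · simp only [Prod.fst_sub, Prod.snd_sub, Prod.fst_add, Prod.snd_add,
          Prod.smul_fst, Prod.smul_snd, smul_eq_mul, Prod.fst_neg, Prod.snd_neg]
        rw [hg1, hg2']
        field_simp
        ring
    · rw [hδ'.deriv, hr.deriv, hK, hq.deriv]
      apply Prod.ext <;>
      · simp only [Prod.fst_sub, Prod.snd_sub, Prod.fst_add, Prod.snd_add,
          Prod.smul_fst, Prod.smul_snd, smul_eq_mul]
        rw [hg1, hg2']
        field_simp
        ring
  exact ⟨fun θ => (main θ).1, fun θ => (main θ).2.1, fun θ => (main θ).2.2⟩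
end
end

section
/- Let γ : ℝ → ℝ × ℝ be a C³ curve with γ′(θ) = r(θ)·p′(θ) for all θ, let h(θ) := [γ(θ), q(θ)] be its support function, let δ := γ − r·p be its evolute with curvature radius r_δ := r′/[q, q′], and define the double evolute η(θ) := δ(θ) − r_δ(θ)·q(θ). Then for all θ: the support function of η satisfies [η(θ), q(θ)] = h(θ) − r(θ) = −(1/[p(θ), p′(θ)])·(h′/[q, q′])′(θ), and η′(θ) = r_η(θ)·p′(θ) where r_η(θ) = −(1/[p(θ), p′(θ)])·(r′/[q, q′])′(θ). -/
open Real MeasureTheory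

noncomputable section

open ContDiff in
lemma my_det2_self (a : ℝ × ℝ) : det2 a a = 0 := by simp [det2, mul_comm]

lemma my_det2_smul_left (c : ℝ) (a b : ℝ × ℝ) : det2 (c • a) b = c * det2 a b := by
  simp [det2]; ring

lemma my_det2_smul_right (c : ℝ) (a b : ℝ × ℝ) : det2 a (c • b) = c * det2 a b := by
  simp [det2]; ring

lemma my_det2_sub_left (a a' b : ℝ × ℝ) : det2 (a - a') b = det2 a b - det2 a' b := by
  simp [det2]; ring

lemma my_det2_swap (a b : ℝ × ℝ) : det2 a b = -det2 b a := by simp [det2]; ring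

lemma my_hasDerivAt_det2 {u v : ℝ → ℝ × ℝ} {u' v' : ℝ × ℝ} {x : ℝ}
    (hu : HasDerivAt u u' x) (hv : HasDerivAt v v' x) :
    HasDerivAt (fun t => det2 (u t) (v t)) (det2 u' (v x) + det2 (u x) v') x := by
  have h1 : HasDerivAt (fun t => (u t).1) u'.1 x :=
    (ContinuousLinearMap.fst ℝ ℝ ℝ).hasFDerivAt.comp_hasDerivAt x hu
  have h2 : HasDerivAt (fun t => (u t).2) u'.2 x :=
    (ContinuousLinearMap.snd ℝ ℝ ℝ).hasFDerivAt.comp_hasDerivAt x hu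
  have h3 : HasDerivAt (fun t => (v t).1) v'.1 x :=
    (ContinuousLinearMap.fst ℝ ℝ ℝ).hasFDerivAt.comp_hasDerivAt x hv
  have h4 : HasDerivAt (fun t => (v t).2) v'.2 x :=
    (ContinuousLinearMap.snd ℝ ℝ ℝ).hasFDerivAt.comp_hasDerivAt x hv
  have h : HasDerivAt (fun t => (u t).1 * (v t).2 - (u t).2 * (v t).1) _ x :=
    (h1.mul h4).sub (h2.mul h3)
  exact h.congr_deriv (by simp [det2]; ring)

/-- the double evolute `η = δ - r_δ·q` has support function
`[η, q] = h - r = -(1/[p,p'])·(h'/[q,q'])'` and curvature radius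
`r_η = -(1/[p,p'])·(r'/[q,q'])'`, with `η' = r_η·p'`. -/
theorem stmt_3 (p : ℝ → ℝ × ℝ) (hP : IsUnitCircle p)
    (γ : ℝ → ℝ × ℝ) (r : ℝ → ℝ) (hγ : ContDiff ℝ 3 γ) (hrC : ContDiff ℝ 2 r)
    (hder : ∀ θ, deriv γ θ = r θ • deriv p θ)
    (h : ℝ → ℝ) (hdef : ∀ θ, h θ = det2 (γ θ) (dualQ p θ))
    (δ : ℝ → ℝ × ℝ) (hδ : ∀ θ, δ θ = γ θ - r θ • p θ)
    (rδ : ℝ → ℝ) (hrδ : ∀ θ, rδ θ = deriv r θ / det2 (dualQ p θ) (deriv (dualQ p) θ))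
    (η : ℝ → ℝ × ℝ) (hη : ∀ θ, η θ = δ θ - rδ θ • dualQ p θ) :
    (∀ θ, det2 (η θ) (dualQ p θ) = h θ - r θ) ∧
    (∀ θ, det2 (η θ) (dualQ p θ) = -(det2 (p θ) (deriv p θ))⁻¹ *
      deriv (fun t => deriv h t / det2 (dualQ p t) (deriv (dualQ p) t)) θ) ∧
    (∀ θ, deriv η θ = (-(det2 (p θ) (deriv p θ))⁻¹ *
      deriv (fun t => deriv r t / det2 (dualQ p t) (deriv (dualQ p) t)) θ) • deriv p θ) := by
  open ContDiff in
  obtain ⟨hps, -, hfpos, hgpos⟩ := hP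
  have hps' : ContDiff ℝ ((⊤:ℕ∞):WithTop ℕ∞) p := hps.of_le (by simp)
  have hp1s : ContDiff ℝ ((⊤:ℕ∞):WithTop ℕ∞) (deriv p) := (contDiff_infty_iff_deriv.mp hps').2
  have hp2s : ContDiff ℝ ((⊤:ℕ∞):WithTop ℕ∞) (deriv (deriv p)) :=
    (contDiff_infty_iff_deriv.mp hp1s).2
  have Hp : ∀ θ, HasDerivAt p (deriv p θ) θ :=
    fun θ => ((hps'.differentiable (by simp)) θ).hasDerivAt
  have Hp1 : ∀ θ, HasDerivAt (deriv p) (deriv (deriv p) θ) θ :=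
    fun θ => ((hp1s.differentiable (by simp)) θ).hasDerivAt
  have hFne : ∀ θ, det2 (p θ) (deriv p θ) ≠ 0 := fun θ => (hfpos θ).ne'
  -- derivative of F = [p, p']
  have HF : ∀ θ, HasDerivAt (fun t => det2 (p t) (deriv p t))
      (det2 (p θ) (deriv (deriv p) θ)) θ := by
    intro θ
    have hh := my_hasDerivAt_det2 (Hp θ) (Hp1 θ)
    simpa [my_det2_self] using hh
  -- derivative of q
  have HQ : ∀ θ, HasDerivAt (dualQ p)
      (-(det2 (deriv p θ) (deriv (deriv p) θ) / (det2 (p θ) (deriv p θ))^2) • p θ) θ := by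
    intro θ
    have hinv : HasDerivAt (fun t => (det2 (p t) (deriv p t))⁻¹)
        (-(det2 (p θ) (deriv (deriv p) θ)) / (det2 (p θ) (deriv p θ))^2) θ :=
      (HF θ).inv (hFne θ)
    have hh := hinv.smul (Hp1 θ)
    have heq : (fun t => (det2 (p t) (deriv p t))⁻¹) • deriv p = dualQ p := rfl
    rw [heq] at hh
    refine hh.congr_deriv ?_
    have hf : (p θ).1 * (deriv p θ).2 - (p θ).2 * (deriv p θ).1 ≠ 0 := by
      simpa [det2] using hFne θ
    apply Prod.ext <;>
      · simp [det2, neg_div]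
        field_simp
        ring
  -- the curvature [q, q']
  have hG : ∀ θ, det2 (dualQ p θ) (deriv (dualQ p) θ) =
      det2 (deriv p θ) (deriv (deriv p) θ) / (det2 (p θ) (deriv p θ))^2 := by
    intro θ
    rw [(HQ θ).deriv]
    have hf : (p θ).1 * (deriv p θ).2 - (p θ).2 * (deriv p θ).1 ≠ 0 := by
      simpa [det2] using hFne θ
    simp [dualQ, det2, neg_div]
    field_simp
    ring
  have hGpos : ∀ θ, 0 < det2 (dualQ p θ) (deriv (dualQ p) θ) := by
    intro θ
    rw [hG θ]
    exact div_pos (hgpos θ) (pow_pos (hfpos θ) 2)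
  have hGne : ∀ θ, det2 (dualQ p θ) (deriv (dualQ p) θ) ≠ 0 := fun θ => (hGpos θ).ne'
  -- q' = -[q,q'] • p
  have HQ' : ∀ θ, HasDerivAt (dualQ p)
      (-(det2 (dualQ p θ) (deriv (dualQ p) θ)) • p θ) θ := by
    intro θ
    rw [hG θ]
    exact HQ θ
  -- [p, q] = 1, [p', q] = 0
  have hpq : ∀ θ, det2 (p θ) (dualQ p θ) = 1 := by
    intro θ
    rw [dualQ, my_det2_smul_right, inv_mul_cancel₀ (hFne θ)]
  have hp'q : ∀ θ, det2 (deriv p θ) (dualQ p θ) = 0 := by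
    intro θ
    rw [dualQ, my_det2_smul_right, my_det2_self, mul_zero]
  -- γ
  have Hγ : ∀ θ, HasDerivAt γ (r θ • deriv p θ) θ := by
    intro θ
    have := ((hγ.differentiable (by norm_num)) θ).hasDerivAt
    rwa [hder θ] at this
  -- h' = [q,q'] · [p, γ]
  have hhfun : h = fun t => det2 (γ t) (dualQ p t) := funext hdef
  have hh' : ∀ θ, deriv h θ =
      det2 (dualQ p θ) (deriv (dualQ p) θ) * det2 (p θ) (γ θ) := by
    intro θ
    rw [hhfun, (my_hasDerivAt_det2 (Hγ θ) (HQ' θ)).deriv, my_det2_smul_left,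
      my_det2_smul_right, hp'q θ, my_det2_swap (γ θ) (p θ)]
    ring
  -- h'/[q,q'] = [p, γ]
  have hratio : (fun t => deriv h t / det2 (dualQ p t) (deriv (dualQ p) t)) =
      fun t => det2 (p t) (γ t) := by
    funext t
    rw [hh' t, mul_comm, mul_div_assoc, div_self (hGne t), mul_one]
  have hd2 : ∀ θ, deriv (fun t => deriv h t / det2 (dualQ p t) (deriv (dualQ p) t)) θ =
      det2 (deriv p θ) (γ θ) + r θ * det2 (p θ) (deriv p θ) := by
    intro θ
    rw [hratio, (my_hasDerivAt_det2 (Hp θ) (Hγ θ)).deriv, my_det2_smul_right]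
  -- Goal 1
  have g1 : ∀ θ, det2 (η θ) (dualQ p θ) = h θ - r θ := by
    intro θ
    rw [hη θ, hδ θ, my_det2_sub_left, my_det2_sub_left, my_det2_smul_left,
      my_det2_smul_left, hpq θ, my_det2_self, hdef θ]
    ring
  refine ⟨g1, ?_, ?_⟩
  -- Goal 2
  · intro θ
    rw [g1 θ, hd2 θ, hdef θ, dualQ, my_det2_smul_right,
      my_det2_swap (γ θ) (deriv p θ)]
    field_simp [hFne θ]
    ring
  -- Goal 3
  · intro θ
    -- differentiability of deriv r
    have hr1s : ContDiff ℝ 1 (deriv r) := by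
      rw [show (2 : WithTop ℕ∞) = 1 + 1 from rfl] at hrC
      exact (contDiff_succ_iff_deriv.mp hrC).2.2
    have Hr : HasDerivAt r (deriv r θ) θ :=
      ((hrC.differentiable (by norm_num)) θ).hasDerivAt
    have Hr1 : ∀ t, HasDerivAt (deriv r) (deriv (deriv r) t) t :=
      fun t => ((hr1s.differentiable one_ne_zero) t).hasDerivAt
    -- q is smooth
    have hFs : ContDiff ℝ ((⊤:ℕ∞):WithTop ℕ∞) (fun t => det2 (p t) (deriv p t)) := by
      simp only [det2]
      exact ((contDiff_fst.comp hps').mul (contDiff_snd.comp hp1s)).sub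
        ((contDiff_snd.comp hps').mul (contDiff_fst.comp hp1s))
    have hqs : ContDiff ℝ ((⊤:ℕ∞):WithTop ℕ∞) (dualQ p) :=
      (hFs.inv hFne).smul hp1s
    have hq1s : ContDiff ℝ ((⊤:ℕ∞):WithTop ℕ∞) (deriv (dualQ p)) :=
      (contDiff_infty_iff_deriv.mp hqs).2
    have HQd : ∀ t, HasDerivAt (dualQ p) (deriv (dualQ p) t) t :=
      fun t => ((hqs.differentiable (by simp)) t).hasDerivAt
    have HQ1 : ∀ t, HasDerivAt (deriv (dualQ p)) (deriv (deriv (dualQ p)) t) t :=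
      fun t => ((hq1s.differentiable (by simp)) t).hasDerivAt
    have HGd : HasDerivAt (fun s => det2 (dualQ p s) (deriv (dualQ p) s))
        (det2 (deriv (dualQ p) θ) (deriv (dualQ p) θ) +
          det2 (dualQ p θ) (deriv (deriv (dualQ p)) θ)) θ :=
      my_hasDerivAt_det2 (HQd θ) (HQ1 θ)
    have hdiff : DifferentiableAt ℝ
        (fun t => deriv r t / det2 (dualQ p t) (deriv (dualQ p) t)) θ :=
      ((Hr1 θ).div HGd (hGne θ)).differentiableAt
    have HrδD : HasDerivAt (fun t => deriv r t / det2 (dualQ p t) (deriv (dualQ p) t))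
        (deriv (fun t => deriv r t / det2 (dualQ p t) (deriv (dualQ p) t)) θ) θ :=
      hdiff.hasDerivAt
    have hηfun : η = fun t => γ t - r t • p t -
        (deriv r t / det2 (dualQ p t) (deriv (dualQ p) t)) • dualQ p t :=
      funext fun t => by rw [hη t, hδ t, hrδ t]
    have Hη := ((Hγ θ).sub (Hr.smul (Hp θ))).sub (HrδD.smul (HQ' θ))
    rw [show (γ - r • p - (fun t => deriv r t / det2 (dualQ p t) (deriv (dualQ p) t)) • dualQ p) = η
      from hηfun.symm] at Hη
    rw [Hη.deriv]
    have hg := hGne θ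
    have hf := hFne θ
    set Dv := deriv (fun t => deriv r t / det2 (dualQ p t) (deriv (dualQ p) t)) θ with hDv
    set g := det2 (dualQ p θ) (deriv (dualQ p) θ) with hgdef
    set F := det2 (p θ) (deriv p θ) with hFdef
    have hqθ : dualQ p θ = F⁻¹ • deriv p θ := rfl
    rw [hqθ]
    apply Prod.ext <;>
      · simp
        field_simp
        ring
end
end

section
/- Let λ > 0 and let u be a solution of the cycloid equation (∗) with parameter λ. Suppose ρ, β : ℝ → ℝ are differentiable functions with ρ(θ) > 0, u(θ) = ρ(θ)·cos β(θ) and u′(θ)/[q(θ), q′(θ)] = ρ(θ)·sin β(θ) for all θ. Then for all θ, β′(θ) = −(λ·[p(θ), p′(θ)]·cos²β(θ) + [q(θ), q′(θ)]·sin²β(θ)) < 0; in particular the point (u(θ), u′(θ)/[q(θ), q′(θ)]) winds strictly monotonically around the origin. -/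
open Real MeasureTheory

noncomputable section

/-- The coefficient `[q,q']` of the dual parameterization is positive. -/
lemma dualQ_det_pos (p : ℝ → ℝ × ℝ) (hP : IsUnitCircle p) (θ : ℝ) :
    0 < det2 (dualQ p θ) (deriv (dualQ p) θ) := by
  obtain ⟨hp, -, hA, hpp⟩ := hP
  have hpd : Differentiable ℝ p := hp.differentiable (by simp)
  have hpinf : ContDiff ℝ (↑(⊤:ℕ∞)) p := hp.of_le (by simp)
  have hp'd : Differentiable ℝ (deriv p) :=
    (contDiff_infty_iff_deriv.mp hpinf).2.differentiable (by simp)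
  have hAdiff : Differentiable ℝ (fun t => det2 (p t) (deriv p t)) := by
    simp only [det2]
    exact ((hpd.fst.mul hp'd.snd).sub (hpd.snd.mul hp'd.fst))
  have hfne : (det2 (p θ) (deriv p θ)) ≠ 0 := (hA θ).ne'
  have hf : DifferentiableAt ℝ (fun t => (det2 (p t) (deriv p t))⁻¹) θ :=
    (hAdiff θ).inv hfne
  have hq : HasDerivAt (dualQ p)
      ((det2 (p θ) (deriv p θ))⁻¹ • deriv (deriv p) θ +
        deriv (fun t => (det2 (p t) (deriv p t))⁻¹) θ • deriv p θ) θ :=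
    hf.hasDerivAt.smul (hp'd θ).hasDerivAt
  rw [hq.deriv]
  have : det2 (dualQ p θ)
      ((det2 (p θ) (deriv p θ))⁻¹ • deriv (deriv p) θ +
        deriv (fun t => (det2 (p t) (deriv p t))⁻¹) θ • deriv p θ)
      = ((det2 (p θ) (deriv p θ))⁻¹)^2 * det2 (deriv p θ) (deriv (deriv p) θ) := by
    simp only [dualQ, det2, Prod.smul_fst, Prod.smul_snd, Prod.fst_add, Prod.snd_add,
      smul_eq_mul]
    ring
  rw [this]
  have h2 : 0 < ((det2 (p θ) (deriv p θ))⁻¹)^2 := by positivity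
  exact mul_pos h2 (hpp θ)

/-- in polar coordinates `(u, u'/[q,q']) = ρ·(cos β, sin β)` with
`ρ > 0`, the angle satisfies `β' = -(λ[p,p']cos²β + [q,q']sin²β) < 0`; the point
`(u, u'/[q,q'])` winds strictly monotonically around the origin. -/
theorem stmt_6 (p : ℝ → ℝ × ℝ) (hP : IsUnitCircle p)
    (lam : ℝ) (hlam : 0 < lam)
    (u : ℝ → ℝ) (hu : IsCycloidSol p lam u)
    (ρ β : ℝ → ℝ) (hρ : Differentiable ℝ ρ) (hβ : Differentiable ℝ β)
    (hρpos : ∀ θ, 0 < ρ θ)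
    (h₁ : ∀ θ, u θ = ρ θ * Real.cos (β θ))
    (h₂ : ∀ θ, deriv u θ / det2 (dualQ p θ) (deriv (dualQ p) θ) = ρ θ * Real.sin (β θ)) :
    ∀ θ, deriv β θ = -(lam * det2 (p θ) (deriv p θ) * Real.cos (β θ) ^ 2 +
        det2 (dualQ p θ) (deriv (dualQ p) θ) * Real.sin (β θ) ^ 2) ∧
      deriv β θ < 0 := by
  intro θ
  obtain ⟨hpc, hsym, hA, hpp⟩ := hP
  set A := det2 (p θ) (deriv p θ) with hAdef
  set D := det2 (dualQ p θ) (deriv (dualQ p) θ) with hDdef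
  have hDpos : 0 < D := dualQ_det_pos p ⟨hpc, hsym, hA, hpp⟩ θ
  have hAne : A ≠ 0 := (hA θ).ne'
  have hDne : D ≠ 0 := hDpos.ne'
  set c := Real.cos (β θ) with hc
  set s := Real.sin (β θ) with hs
  -- derivative of u via polar form
  have hufun : u = fun t => ρ t * Real.cos (β t) := funext h₁
  have hcosd : HasDerivAt (fun t => Real.cos (β t)) (-s * deriv β θ) θ :=
    (Real.hasDerivAt_cos (β θ)).comp θ (hβ θ).hasDerivAt
  have hu' : deriv u θ = deriv ρ θ * c - ρ θ * (s * deriv β θ) := by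
    rw [hufun]
    have := ((hρ θ).hasDerivAt.mul hcosd).deriv
    rw [show (fun t => ρ t * Real.cos (β t)) = ρ * fun t => Real.cos (β t) from rfl, this]; ring
  -- derivative of u via h₂
  have hu'2 : deriv u θ = ρ θ * s * D := by
    have := h₂ θ
    rw [div_eq_iff hDne] at this
    rw [this]
  -- derivative of v = u'/D via polar form
  have hvfun : (fun t => deriv u t / det2 (dualQ p t) (deriv (dualQ p) t))
      = fun t => ρ t * Real.sin (β t) := funext h₂
  have hsind : HasDerivAt (fun t => Real.sin (β t)) (c * deriv β θ) θ :=
    (Real.hasDerivAt_sin (β θ)).comp θ (hβ θ).hasDerivAt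
  have hv' : deriv (fun t => deriv u t / det2 (dualQ p t) (deriv (dualQ p) t)) θ
      = deriv ρ θ * s + ρ θ * (c * deriv β θ) := by
    rw [hvfun]
    exact ((hρ θ).hasDerivAt.mul hsind).deriv
  -- cycloid equation
  have hcyc := hu.2 θ
  rw [hv', h₁ θ] at hcyc
  have E1 : deriv ρ θ * s + ρ θ * (c * deriv β θ) = -lam * A * (ρ θ * c) := by
    rw [inv_mul_eq_div, div_eq_iff hAne] at hcyc
    linear_combination hcyc
  have E2 : deriv ρ θ * c - ρ θ * (s * deriv β θ) = ρ θ * s * D := by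
    rw [← hu', hu'2]
  have pyth : s ^ 2 + c ^ 2 = 1 := Real.sin_sq_add_cos_sq (β θ)
  have key : ρ θ * deriv β θ = ρ θ * (-(lam * A * c ^ 2 + D * s ^ 2)) := by
    linear_combination c * E1 - s * E2 - (ρ θ * deriv β θ) * pyth
  have hbeta : deriv β θ = -(lam * A * c ^ 2 + D * s ^ 2) :=
    mul_left_cancel₀ (hρpos θ).ne' key
  refine ⟨hbeta, ?_⟩
  rw [hbeta]
  have hlA : 0 < lam * A := mul_pos hlam (hA θ)
  have hpos : 0 < lam * A * c ^ 2 + D * s ^ 2 := by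
    rcases eq_or_ne c 0 with h | h
    · have hs1 : s ^ 2 = 1 := by rw [← pyth, h]; ring
      rw [h, hs1]; simpa using hDpos
    · have hc2 : 0 < c ^ 2 := by positivity
      nlinarith [mul_pos hlA hc2, mul_nonneg hDpos.le (sq_nonneg s)]
  linarith
end
end

section
/- Let u be a solution of the cycloid equation (∗) with parameter λ ∈ ℝ that is not identically zero, and let γ : ℝ → ℝ × ℝ be a C² curve with γ′(θ) = u(θ)·p′(θ) for all θ. If u(θ₀) = 0 for some θ₀, then u′(θ₀) ≠ 0 and γ″(θ₀) = u′(θ₀)·p′(θ₀) ≠ (0, 0). Hence the cycloid γ is regular except at isolated points, which are ordinary cusps. -/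
open Real MeasureTheory
open scoped ContDiff

noncomputable section

/-- det2 of contDiff curves is contDiff. -/
lemma contDiff_det2 {n : WithTop ℕ∞} {f g : ℝ → ℝ × ℝ} (hf : ContDiff ℝ n f)
    (hg : ContDiff ℝ n g) : ContDiff ℝ n (fun θ => det2 (f θ) (g θ)) := by
  unfold det2
  exact ((contDiff_fst.comp hf).mul (contDiff_snd.comp hg)).sub
    ((contDiff_snd.comp hf).mul (contDiff_fst.comp hg))

/-- Grönwall: a function with derivative linearly bounded by itself, vanishing
at a point, vanishes to the right of that point. -/
lemma gronwall_zero_right {E : Type*} [NormedAddCommGroup E] [NormedSpace ℝ E]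
    (f f' : ℝ → E) (c : ℝ → ℝ) (hc : Continuous c)
    (hf : ∀ t, HasDerivAt f (f' t) t)
    (hb : ∀ t, ‖f' t‖ ≤ c t * ‖f t‖)
    (θ₀ : ℝ) (h0 : f θ₀ = 0) : ∀ t, θ₀ ≤ t → f t = 0 := by
  intro T hT
  obtain ⟨K, hK⟩ := (isCompact_Icc (a := θ₀) (b := T)).exists_bound_of_continuousOn
    hc.continuousOn
  have hcont : ContinuousOn f (Set.Icc θ₀ T) :=
    (fun t _ => ((hf t).continuousAt.continuousWithinAt))
  have key := norm_le_gronwallBound_of_norm_deriv_right_le (f := f) (f' := f')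
    (δ := 0) (K := K) (ε := 0) (a := θ₀) (b := T) hcont
    (fun x _ => (hf x).hasDerivWithinAt)
    (by simp [h0])
    (fun x hx => by
      have h1 : c x ≤ K := le_trans (le_abs_self _)
        (by simpa using hK x (Set.mem_Icc_of_Ico hx))
      have := hb x
      have h2 : c x * ‖f x‖ ≤ K * ‖f x‖ :=
        mul_le_mul_of_nonneg_right h1 (norm_nonneg _)
      linarith)
  have := key T ⟨hT, le_refl T⟩
  rw [gronwallBound_ε0_δ0] at this
  exact norm_le_zero_iff.mp this

/-- Grönwall both ways: such a function vanishes identically. -/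
lemma gronwall_zero {E : Type*} [NormedAddCommGroup E] [NormedSpace ℝ E]
    (f f' : ℝ → E) (c : ℝ → ℝ) (hc : Continuous c)
    (hf : ∀ t, HasDerivAt f (f' t) t)
    (hb : ∀ t, ‖f' t‖ ≤ c t * ‖f t‖)
    (θ₀ : ℝ) (h0 : f θ₀ = 0) : ∀ t, f t = 0 := by
  intro t
  rcases le_total θ₀ t with h | h
  · exact gronwall_zero_right f f' c hc hf hb θ₀ h0 t h
  · -- reflect
    have hrefl : ∀ s : ℝ, HasDerivAt (fun s => f (2 * θ₀ - s)) (-f' (2 * θ₀ - s)) s := by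
      intro s
      have hg : HasDerivAt (fun s : ℝ => 2 * θ₀ - s) (-1) s := by
        simpa using (hasDerivAt_id s).const_sub (2 * θ₀)
      have := (hf (2 * θ₀ - s)).scomp s hg
      simpa [Function.comp_def] using this
    have key := gronwall_zero_right (fun s => f (2 * θ₀ - s)) (fun s => -f' (2 * θ₀ - s))
      (fun s => c (2 * θ₀ - s)) (hc.comp (by continuity)) hrefl
      (fun s => by simpa using hb (2 * θ₀ - s)) θ₀
      (by show f (2 * θ₀ - θ₀) = 0; rw [show 2 * θ₀ - θ₀ = θ₀ by ring]; exact h0)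
      (2 * θ₀ - t) (by linarith)
    simpa using key

/-- a nonzero solution `u` of the cycloid equation with a zero at `θ₀`
has `u'(θ₀) ≠ 0`, and the cycloid `γ` (with `γ' = u·p'`) satisfies
`γ''(θ₀) = u'(θ₀)·p'(θ₀) ≠ 0`: its singular points are ordinary cusps. -/
theorem stmt_10 (p : ℝ → ℝ × ℝ) (hP : IsUnitCircle p) (lam : ℝ)
    (u : ℝ → ℝ) (hu : IsCycloidSol p lam u) (hu0 : u ≠ 0)
    (γ : ℝ → ℝ × ℝ) (hγ : ContDiff ℝ 2 γ)
    (hder : ∀ θ, deriv γ θ = u θ • deriv p θ)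
    (θ₀ : ℝ) (hz : u θ₀ = 0) :
    deriv u θ₀ ≠ 0 ∧
    deriv (deriv γ) θ₀ = deriv u θ₀ • deriv p θ₀ ∧
    deriv (deriv γ) θ₀ ≠ 0 := by
  obtain ⟨hp, -, hpa, hpb⟩ := hP
  obtain ⟨hu2, heq⟩ := hu
  have h1inf : (1 : WithTop ℕ∞) ≤ ∞ := by exact_mod_cast le_top
  have hp' : ContDiff ℝ ∞ p := hp.of_le (by simp)
  have hp1 : ContDiff ℝ ∞ (deriv p) := (contDiff_infty_iff_deriv.mp hp').2
  have hp2 : ContDiff ℝ ∞ (deriv (deriv p)) := (contDiff_infty_iff_deriv.mp hp1).2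
  set a : ℝ → ℝ := fun θ => det2 (p θ) (deriv p θ) with ha_def
  have ha_ne : ∀ θ, a θ ≠ 0 := fun θ => (hpa θ).ne'
  have haC : ContDiff ℝ ∞ a := contDiff_det2 hp' hp1
  have haD : Differentiable ℝ a := haC.differentiable (by simp)
  -- derivative of dualQ
  have hq_deriv : ∀ θ, HasDerivAt (dualQ p)
      ((a θ)⁻¹ • deriv (deriv p) θ + (-(deriv a θ) / (a θ) ^ 2) • deriv p θ) θ := by
    intro θ
    have h1 : HasDerivAt (fun t => (a t)⁻¹) (-(deriv a θ) / (a θ) ^ 2) θ :=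
      (haD θ).hasDerivAt.inv (ha_ne θ)
    have h2 : HasDerivAt (deriv p) (deriv (deriv p) θ) θ :=
      (hp1.differentiable (by simp) θ).hasDerivAt
    exact h1.smul h2
  set w : ℝ → ℝ := fun t => det2 (dualQ p t) (deriv (dualQ p) t) with hw_def
  have hw_eq : ∀ θ, w θ = (a θ)⁻¹ * ((a θ)⁻¹ * det2 (deriv p θ) (deriv (deriv p) θ)) := by
    intro θ
    have := (hq_deriv θ).deriv
    simp only [hw_def, this, dualQ, det2, Prod.smul_fst, Prod.smul_snd,
      Prod.fst_add, Prod.snd_add, smul_eq_mul]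
    rw [show (p θ).1 * (deriv p θ).2 - (p θ).2 * (deriv p θ).1 = a θ from rfl]
    ring
  have hw_pos : ∀ θ, 0 < w θ := fun θ => by
    rw [hw_eq θ]
    exact mul_pos (inv_pos.2 (hpa θ)) (mul_pos (inv_pos.2 (hpa θ)) (hpb θ))
  have hw_ne : ∀ θ, w θ ≠ 0 := fun θ => (hw_pos θ).ne'
  have hqC : ContDiff ℝ ∞ (dualQ p) := by
    have : ContDiff ℝ ∞ (fun θ => (a θ)⁻¹) := haC.inv ha_ne
    exact this.smul hp1
  have hq'C : ContDiff ℝ ∞ (deriv (dualQ p)) := (contDiff_infty_iff_deriv.mp hqC).2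
  have hwC : ContDiff ℝ ∞ w := contDiff_det2 hqC hq'C
  -- u' is C¹
  have hu1 : ContDiff ℝ 1 (deriv u) := by
    have : ContDiff ℝ ((1 : ℕ∞) + 1) u := by
      convert hu2 using 2
      norm_num
    exact (contDiff_succ_iff_deriv.mp this).2.2
  set v : ℝ → ℝ := fun t => deriv u t / w t with hv_def
  have hvC : ContDiff ℝ 1 v := hu1.div (hwC.of_le h1inf) hw_ne
  have hvD : Differentiable ℝ v := hvC.differentiable one_ne_zero
  have huD : Differentiable ℝ u := hu2.differentiable (by norm_num)
  -- the ODE as a genuine derivative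
  have hv' : ∀ θ, HasDerivAt v (-(lam * (a θ * u θ))) θ := by
    intro θ
    have h : (a θ)⁻¹ * deriv v θ = -lam * u θ := heq θ
    have hd : deriv v θ = -(lam * (a θ * u θ)) := by
      have h2 := congrArg (fun x => a θ * x) h
      simp only [← mul_assoc, mul_inv_cancel₀ (ha_ne θ), one_mul] at h2
      rw [h2]; ring
    rw [← hd]
    exact (hvD θ).hasDerivAt
  have hu' : ∀ θ, deriv u θ = w θ * v θ := by
    intro θ
    simp only [hv_def]
    rw [mul_comm, div_mul_cancel₀ _ (hw_ne θ)]
  -- the vector field and its bound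
  set f : ℝ → ℝ × ℝ := fun t => (u t, v t) with hf_def
  have hf' : ∀ t, HasDerivAt f (w t * v t, -(lam * (a t * u t))) t := by
    intro t
    have h1 : HasDerivAt u (w t * v t) t := by
      rw [← hu' t]; exact (huD t).hasDerivAt
    exact h1.prodMk (hv' t)
  set c : ℝ → ℝ := fun t => |w t| + |lam * a t| with hc_def
  have hcC : Continuous c :=
    ((hwC.continuous).abs).add ((continuous_const.mul haC.continuous).abs)
  have hbound : ∀ t, ‖(w t * v t, -(lam * (a t * u t)))‖ ≤ c t * ‖f t‖ := by
    intro t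
    rw [Prod.norm_def, Prod.norm_def]
    simp only [Real.norm_eq_abs, norm_neg, hf_def]
    have hM : (0 : ℝ) ≤ max |u t| |v t| := le_trans (abs_nonneg _) (le_max_left _ _)
    apply max_le
    · have : |w t * v t| ≤ |w t| * max |u t| |v t| := by
        rw [abs_mul]
        exact mul_le_mul_of_nonneg_left (le_max_right _ _) (abs_nonneg _)
      have h2 : |w t| * max |u t| |v t| ≤ c t * max |u t| |v t| :=
        mul_le_mul_of_nonneg_right (le_add_of_nonneg_right (abs_nonneg _)) hM
      linarith
    · have : |lam * (a t * u t)| ≤ |lam * a t| * max |u t| |v t| := by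
        rw [show lam * (a t * u t) = lam * a t * u t by ring, abs_mul]
        exact mul_le_mul_of_nonneg_left (le_max_left _ _) (abs_nonneg _)
      have h2 : |lam * a t| * max |u t| |v t| ≤ c t * max |u t| |v t| :=
        mul_le_mul_of_nonneg_right (le_add_of_nonneg_left (abs_nonneg _)) hM
      linarith
  -- u'(θ₀) ≠ 0
  have hune : deriv u θ₀ ≠ 0 := by
    intro hcon
    have hf0 : f θ₀ = 0 := by
      simp only [hf_def, hv_def, hz, hcon, zero_div]
      rfl
    have hall := gronwall_zero f (fun t => (w t * v t, -(lam * (a t * u t)))) c hcC hf'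
      hbound θ₀ hf0
    apply hu0
    funext t
    have := congrArg Prod.fst (hall t)
    simpa [hf_def] using this
  -- second derivative of γ
  have hγ2 : deriv (deriv γ) θ₀ = deriv u θ₀ • deriv p θ₀ := by
    have hγ' : deriv γ = fun θ => u θ • deriv p θ := funext hder
    rw [hγ']
    have h : HasDerivAt (fun θ => u θ • deriv p θ) _ θ₀ :=
      ((huD θ₀).hasDerivAt).smul ((hp1.differentiable (by simp) θ₀).hasDerivAt)
    rw [h.deriv, hz]
    simp
  refine ⟨hune, hγ2, ?_⟩
  rw [hγ2]
  apply smul_ne_zero hune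
  intro hcon
  have := hpa θ₀
  rw [hcon] at this
  simp [det2] at this
end
end

section
/- (i) For every v ∈ ℝ², the function u(θ) := [v, q(θ)] is a solution of the cycloid equation (∗) with parameter λ = 1. (ii) Every solution u of (∗) with parameter λ = 1 satisfies, for all θ₀ and θ, u(θ) = (1/[q(θ₀), q′(θ₀)])·([q(θ₀), q(θ)]·u′(θ₀) − [q′(θ₀), q(θ)]·u(θ₀)); in particular u(θ + π) = −u(θ) and u′(θ + π) = −u′(θ) for all θ, so every solution is 2π-periodic and λ = 1 is a double eigenvalue of the 2π-periodic problem for (∗). -/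
open Real MeasureTheory

noncomputable section

namespace Stmt12Aux

/-- `[p', p'']/[p,p']²`, which will turn out to equal `[q, q']`. -/
def KK (p : ℝ → ℝ × ℝ) : ℝ → ℝ :=
  fun θ => det2 (deriv p θ) (deriv (deriv p) θ) / (det2 (p θ) (deriv p θ)) ^ 2

lemma hasDerivAt_fst' {f : ℝ → ℝ × ℝ} {f' : ℝ × ℝ} {x : ℝ} (h : HasDerivAt f f' x) :
    HasDerivAt (fun t => (f t).1) f'.1 x := by
  exact (hasFDerivAt_fst.comp x h.hasFDerivAt).hasDerivAt.congr_deriv (by simp)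

lemma hasDerivAt_snd' {f : ℝ → ℝ × ℝ} {f' : ℝ × ℝ} {x : ℝ} (h : HasDerivAt f f' x) :
    HasDerivAt (fun t => (f t).2) f'.2 x := by
  exact (hasFDerivAt_snd.comp x h.hasFDerivAt).hasDerivAt.congr_deriv (by simp)

lemma hasDerivAt_det2 {f g : ℝ → ℝ × ℝ} {f' g' : ℝ × ℝ} {x : ℝ}
    (hf : HasDerivAt f f' x) (hg : HasDerivAt g g' x) :
    HasDerivAt (fun t => det2 (f t) (g t)) (det2 f' (g x) + det2 (f x) g') x := by
  have h := (((hasDerivAt_fst' hf).mul (hasDerivAt_snd' hg)).sub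
    ((hasDerivAt_snd' hf).mul (hasDerivAt_fst' hg)))
  have : f'.1 * (g x).2 + (f x).1 * g'.2 - (f'.2 * (g x).1 + (f x).2 * g'.1)
      = det2 f' (g x) + det2 (f x) g' := by simp [det2]; ring
  rw [← this]; exact h

section withP

variable {p : ℝ → ℝ × ℝ}

lemma diff_p (hP : IsUnitCircle p) : Differentiable ℝ p := by
  have h0 : ContDiff ℝ (⊤:ℕ∞) p := hP.1.of_le (by simp)
  exact (contDiff_infty_iff_deriv.mp h0).1

lemma contDiff_dp (hP : IsUnitCircle p) : ContDiff ℝ ((⊤:ℕ∞) : WithTop ℕ∞) (deriv p) := by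
  have h0 : ContDiff ℝ (⊤:ℕ∞) p := hP.1.of_le (by simp)
  exact (contDiff_infty_iff_deriv.mp h0).2

lemma diff_dp (hP : IsUnitCircle p) : Differentiable ℝ (deriv p) :=
  (contDiff_infty_iff_deriv.mp (contDiff_dp hP)).1

lemma contDiff_ddp (hP : IsUnitCircle p) : ContDiff ℝ ((⊤:ℕ∞) : WithTop ℕ∞) (deriv (deriv p)) :=
  (contDiff_infty_iff_deriv.mp (contDiff_dp hP)).2

lemma diff_ddp (hP : IsUnitCircle p) : Differentiable ℝ (deriv (deriv p)) :=
  (contDiff_infty_iff_deriv.mp (contDiff_ddp hP)).1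

lemma rr_ne (hP : IsUnitCircle p) (θ : ℝ) : det2 (p θ) (deriv p θ) ≠ 0 := ne_of_gt (hP.2.2.1 θ)

lemma KK_pos (hP : IsUnitCircle p) (θ : ℝ) : 0 < KK p θ :=
  div_pos (hP.2.2.2 θ) (pow_pos (hP.2.2.1 θ) 2)

lemma KK_ne (hP : IsUnitCircle p) (θ : ℝ) : KK p θ ≠ 0 := ne_of_gt (KK_pos hP θ)

/-- derivative of `r = [p, p']` is `[p, p'']`. -/
lemma hasDerivAt_rr (hP : IsUnitCircle p) (θ : ℝ) :
    HasDerivAt (fun t => det2 (p t) (deriv p t)) (det2 (p θ) (deriv (deriv p) θ)) θ := by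
  have h := hasDerivAt_det2 ((diff_p hP θ).hasDerivAt) ((diff_dp hP θ).hasDerivAt)
  convert h using 1
  simp [det2]
  ring

/-- Key formula: `q' = −KK·p` (2D Cramer identity). -/
lemma hasDerivAt_q (hP : IsUnitCircle p) (θ : ℝ) :
    HasDerivAt (dualQ p) (-(KK p θ) • p θ) θ := by
  have hr := hasDerivAt_rr hP θ
  have hinv := hr.inv (rr_ne hP θ)
  have h := hinv.smul ((diff_dp hP θ).hasDerivAt)
  have hfun : dualQ p = fun t => (det2 (p t) (deriv p t))⁻¹ • deriv p t := rfl
  rw [hfun]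
  refine h.congr_deriv ?_
  have hr0 := rr_ne hP θ
  apply Prod.ext <;>
  · simp only [det2, KK, Prod.smul_fst, Prod.smul_snd, Prod.fst_add, Prod.snd_add,
      Pi.inv_apply, smul_eq_mul, Prod.fst_neg, Prod.snd_neg, neg_mul]
    simp only [det2] at hr0 ⊢
    field_simp
    ring

lemma deriv_q (hP : IsUnitCircle p) (θ : ℝ) :
    deriv (dualQ p) θ = -(KK p θ) • p θ := (hasDerivAt_q hP θ).deriv

lemma EE_eq (hP : IsUnitCircle p) (θ : ℝ) :
    det2 (dualQ p θ) (deriv (dualQ p) θ) = KK p θ := by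
  have hr0 := rr_ne hP θ
  rw [deriv_q hP θ]
  simp only [det2, KK, dualQ, Prod.smul_fst, Prod.smul_snd, smul_eq_mul,
    Prod.fst_neg, Prod.snd_neg, neg_mul]
  simp only [det2] at hr0 ⊢
  field_simp
  ring

lemma EE_pos (hP : IsUnitCircle p) (θ : ℝ) :
    0 < det2 (dualQ p θ) (deriv (dualQ p) θ) := by
  rw [EE_eq hP θ]; exact KK_pos hP θ

lemma det2_p_q (hP : IsUnitCircle p) (θ : ℝ) : det2 (p θ) (dualQ p θ) = 1 := by
  have hr0 := rr_ne hP θ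
  simp only [det2, dualQ, Prod.smul_fst, Prod.smul_snd, smul_eq_mul]
  simp only [det2] at hr0 ⊢
  field_simp

lemma dp_eq (hP : IsUnitCircle p) (θ : ℝ) :
    deriv p θ = det2 (p θ) (deriv p θ) • dualQ p θ := by
  rw [dualQ, smul_smul, mul_inv_cancel₀ (rr_ne hP θ), one_smul]

lemma contDiff_q (hP : IsUnitCircle p) :
    ContDiff ℝ ((⊤:ℕ∞) : WithTop ℕ∞) (dualQ p) := by
  have hp : ContDiff ℝ ((⊤:ℕ∞) : WithTop ℕ∞) p := hP.1.of_le (by simp)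
  have hdp := contDiff_dp hP
  have hrr : ContDiff ℝ ((⊤:ℕ∞) : WithTop ℕ∞) (fun θ => det2 (p θ) (deriv p θ)) :=
    (hp.fst.mul hdp.snd).sub (hp.snd.mul hdp.fst)
  exact (hrr.inv (rr_ne hP)).smul hdp

lemma dp_anti (hP : IsUnitCircle p) (θ : ℝ) : deriv p (θ + π) = -deriv p θ := by
  have h1 : (fun t => p (t + π)) = fun t => -p t := funext (fun t => hP.2.1 t)
  calc deriv p (θ + π) = deriv (fun t => p (t + π)) θ := (deriv_comp_add_const p π θ).symm
    _ = deriv (fun t => -p t) θ := by rw [h1]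
    _ = -deriv p θ := deriv.neg

lemma q_anti (hP : IsUnitCircle p) (θ : ℝ) : dualQ p (θ + π) = -dualQ p θ := by
  have h2 : det2 (-p θ) (-deriv p θ) = det2 (p θ) (deriv p θ) := by
    simp [det2]
  simp only [dualQ, hP.2.1 θ, dp_anti hP θ, h2, smul_neg]

lemma det2_smul_right (c : ℝ) (a b : ℝ × ℝ) : det2 a (c • b) = c * det2 a b := by
  simp only [det2, Prod.smul_fst, Prod.smul_snd, smul_eq_mul]; ring

lemma hasDerivAt_det2_const (hP : IsUnitCircle p) (v : ℝ × ℝ) (θ : ℝ) :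
    HasDerivAt (fun t => det2 v (dualQ p t)) (-(KK p θ) * det2 v (p θ)) θ := by
  have h := hasDerivAt_det2 (hasDerivAt_const θ v) (hasDerivAt_q hP θ)
  convert h using 1
  simp only [det2, Prod.smul_fst, Prod.smul_snd, Prod.fst_neg, Prod.snd_neg,
    smul_eq_mul, Prod.fst_zero, Prod.snd_zero]
  ring

lemma wtilde_eq (hP : IsUnitCircle p) (v : ℝ × ℝ) :
    (fun t => deriv (fun s => det2 v (dualQ p s)) t / det2 (dualQ p t) (deriv (dualQ p) t))
      = fun t => -det2 v (p t) := by
  funext t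
  rw [(hasDerivAt_det2_const hP v t).deriv, EE_eq hP t]
  field_simp [KK_ne hP t]

lemma part_i (hP : IsUnitCircle p) (v : ℝ × ℝ) :
    IsCycloidSol p 1 (fun θ => det2 v (dualQ p θ)) := by
  constructor
  · have hq := contDiff_q hP
    have h2 : ContDiff ℝ ((⊤:ℕ∞) : WithTop ℕ∞) (fun θ => det2 v (dualQ p θ)) :=
      (contDiff_const.mul hq.snd).sub (contDiff_const.mul hq.fst)
    refine h2.of_le ?_
    have : ((2:ℕ∞) : WithTop ℕ∞) ≤ ((⊤:ℕ∞) : WithTop ℕ∞) := WithTop.coe_le_coe.mpr le_top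
    simpa using this
  · intro θ
    rw [wtilde_eq hP v]
    have h1 : HasDerivAt (fun t => -det2 v (p t)) (-(det2 v (deriv p θ))) θ := by
      have h0 := (hasDerivAt_det2 (hasDerivAt_const θ v) ((diff_p hP θ).hasDerivAt)).neg
      refine h0.congr_deriv ?_
      simp only [det2, Prod.fst_zero, Prod.snd_zero]
      ring
    rw [h1.deriv]
    simp only [dualQ, det2_smul_right]
    ring

lemma det2_dp (hP : IsUnitCircle p) (w : ℝ × ℝ) (s : ℝ) :
    det2 w (deriv p s) = det2 (p s) (deriv p s) * det2 w (dualQ p s) := by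
  conv_lhs => rw [dp_eq hP s]
  rw [det2_smul_right]

lemma rep (hP : IsUnitCircle p) {u : ℝ → ℝ} (hu : IsCycloidSol p 1 u) (θ₀ θ : ℝ) :
    u θ = det2 ((det2 (dualQ p θ₀) (deriv (dualQ p) θ₀))⁻¹ •
      (deriv u θ₀ • dualQ p θ₀ - u θ₀ • deriv (dualQ p) θ₀)) (dualQ p θ) := by
  obtain ⟨hu2, heq⟩ := hu
  set v : ℝ × ℝ := (det2 (dualQ p θ₀) (deriv (dualQ p) θ₀))⁻¹ •
      (deriv u θ₀ • dualQ p θ₀ - u θ₀ • deriv (dualQ p) θ₀) with hv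
  set U : ℝ → ℝ := fun s => det2 v (dualQ p s) with hUdef
  have hE0 : det2 (dualQ p θ₀) (deriv (dualQ p) θ₀) ≠ 0 := ne_of_gt (EE_pos hP θ₀)
  -- initial values agree
  have hU0 : U θ₀ = u θ₀ := by
    simp only [hUdef, hv, det2, Prod.smul_fst, Prod.smul_snd, Prod.fst_sub, Prod.snd_sub,
      smul_eq_mul]
    simp only [det2] at hE0
    field_simp
    ring
  have hDU : ∀ s, HasDerivAt U (det2 v (deriv (dualQ p) s)) s := by
    intro s
    have h2 : det2 v (deriv (dualQ p) s) = -(KK p s) * det2 v (p s) := by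
      rw [deriv_q hP s, det2_smul_right]
    rw [h2]
    exact hasDerivAt_det2_const hP v s
  have hdUeq : ∀ s, deriv U s = -(KK p s) * det2 v (p s) := by
    intro s
    rw [(hDU s).deriv, deriv_q hP s, det2_smul_right]
  have hU'0 : deriv U θ₀ = deriv u θ₀ := by
    rw [(hDU θ₀).deriv]
    simp only [hv, det2, Prod.smul_fst, Prod.smul_snd, Prod.fst_sub, Prod.snd_sub,
      smul_eq_mul]
    simp only [det2] at hE0
    field_simp
    ring
  -- rewrite the ODE with KK
  simp only [EE_eq hP] at heq
  -- u is differentiable, deriv u is differentiable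
  have hud : Differentiable ℝ u := hu2.differentiable (by
    have : ((1:ℕ∞) : WithTop ℕ∞) ≤ ((2:ℕ∞) : WithTop ℕ∞) := by
      exact_mod_cast (by norm_num : (1:ℕ∞) ≤ 2)
    simpa using this)
  have hdu : Differentiable ℝ (deriv u) := by
    have h21 : (2 : WithTop ℕ∞) = 1 + 1 := by norm_num
    rw [h21] at hu2
    exact ((contDiff_succ_iff_deriv.mp hu2).2.2).differentiable one_ne_zero
  have hKKd : Differentiable ℝ (KK p) := by
    have hkk : KK p = fun θ => ((deriv p θ).1 * (deriv (deriv p) θ).2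
        - (deriv p θ).2 * (deriv (deriv p) θ).1) /
      (((p θ).1 * (deriv p θ).2 - (p θ).2 * (deriv p θ).1) ^ 2) := rfl
    rw [hkk]
    refine Differentiable.div ?_ ?_ ?_
    · exact ((diff_dp hP).fst.mul (diff_ddp hP).snd).sub ((diff_dp hP).snd.mul (diff_ddp hP).fst)
    · exact (((diff_p hP).fst.mul (diff_dp hP).snd).sub ((diff_p hP).snd.mul (diff_dp hP).fst)).pow 2
    · intro s
      have := rr_ne hP s
      simp only [det2] at this
      positivity
  -- derivative of w = u'/KK
  have hw : ∀ s, HasDerivAt (fun t => deriv u t / KK p t)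
      (-(det2 (p s) (deriv p s)) * u s) s := by
    intro s
    have hd : DifferentiableAt ℝ (fun t => deriv u t / KK p t) s :=
      (hdu s).div (hKKd s) (KK_ne hP s)
    have h1 := heq s
    rw [inv_mul_eq_iff_eq_mul₀ (rr_ne hP s)] at h1
    have h2 : deriv (fun t => deriv u t / KK p t) s = -(det2 (p s) (deriv p s)) * u s := by
      rw [h1]; ring
    exact h2 ▸ hd.hasDerivAt
  -- derivative of g = u'/KK + [v,p]  (i.e. w - w̃)
  have hvp : ∀ s, HasDerivAt (fun t => det2 v (p t)) (det2 v (deriv p s)) s := by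
    intro s
    have h0 := hasDerivAt_det2 (hasDerivAt_const s v) ((diff_p hP s).hasDerivAt)
    convert h0 using 1
    simp only [det2, Prod.fst_zero, Prod.snd_zero]
    ring
  have hg : ∀ s, HasDerivAt (fun t => deriv u t / KK p t + det2 v (p t))
      (-(det2 (p s) (deriv p s)) * (u s - U s)) s := by
    intro s
    have h := (hw s).add (hvp s)
    refine h.congr_deriv ?_
    rw [det2_dp hP v s]
    simp only [hUdef]
    ring
  -- derivative of d = u - U
  have hd : ∀ s, HasDerivAt (fun t => u t - U t)
      (KK p s * (deriv u s / KK p s + det2 v (p s))) s := by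
    intro s
    have h := ((hud s).hasDerivAt).sub (hDU s)
    refine h.congr_deriv ?_
    have h2 : det2 v (deriv (dualQ p) s) = -(KK p s) * det2 v (p s) := by
      rw [deriv_q hP s, det2_smul_right]
    rw [h2]
    field_simp [KK_ne hP s]
    ring
  -- the two conserved quantities
  have hW1 : ∀ s, HasDerivAt (fun t => (dualQ p t).2 * (deriv u t / KK p t + det2 v (p t))
      + (u t - U t) * (p t).2) 0 s := by
    intro s
    have hq2 := hasDerivAt_snd' (hasDerivAt_q hP s)
    have hp2 := hasDerivAt_snd' ((diff_p hP s).hasDerivAt)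
    have h := (hq2.mul (hg s)).add ((hd s).mul hp2)
    refine h.congr_deriv ?_
    have e1 : (deriv p s).2 = det2 (p s) (deriv p s) * (dualQ p s).2 := by
      conv_lhs => rw [dp_eq hP s]
      simp [Prod.smul_snd]
    rw [e1]
    simp only [Prod.smul_snd, Prod.snd_neg, smul_eq_mul, neg_mul]
    ring
  have hW2 : ∀ s, HasDerivAt (fun t => (dualQ p t).1 * (deriv u t / KK p t + det2 v (p t))
      + (u t - U t) * (p t).1) 0 s := by
    intro s
    have hq1 := hasDerivAt_fst' (hasDerivAt_q hP s)
    have hp1 := hasDerivAt_fst' ((diff_p hP s).hasDerivAt)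
    have h := (hq1.mul (hg s)).add ((hd s).mul hp1)
    refine h.congr_deriv ?_
    have e1 : (deriv p s).1 = det2 (p s) (deriv p s) * (dualQ p s).1 := by
      conv_lhs => rw [dp_eq hP s]
      simp [Prod.smul_fst]
    rw [e1]
    simp only [Prod.smul_fst, Prod.fst_neg, smul_eq_mul, neg_mul]
    ring
  -- g and d vanish at θ₀
  have hG0 : deriv u θ₀ / KK p θ₀ + det2 v (p θ₀) = 0 := by
    have h1 := hdUeq θ₀
    rw [hU'0] at h1
    have hK := KK_ne hP θ₀
    field_simp
    linarith [h1]
  have hd0 : u θ₀ - U θ₀ = 0 := by rw [hU0]; ring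
  -- conserved quantities vanish identically
  have hW1z : ∀ s, (dualQ p s).2 * (deriv u s / KK p s + det2 v (p s))
      + (u s - U s) * (p s).2 = 0 := by
    intro s
    have hconst := is_const_of_deriv_eq_zero (f := fun t => (dualQ p t).2 *
        (deriv u t / KK p t + det2 v (p t)) + (u t - U t) * (p t).2)
      (fun x => (hW1 x).differentiableAt) (fun x => (hW1 x).deriv) s θ₀
    rw [hconst, hG0, hd0]
    ring
  have hW2z : ∀ s, (dualQ p s).1 * (deriv u s / KK p s + det2 v (p s))
      + (u s - U s) * (p s).1 = 0 := by
    intro s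
    have hconst := is_const_of_deriv_eq_zero (f := fun t => (dualQ p t).1 *
        (deriv u t / KK p t + det2 v (p t)) + (u t - U t) * (p t).1)
      (fun x => (hW2 x).differentiableAt) (fun x => (hW2 x).deriv) s θ₀
    rw [hconst, hG0, hd0]
    ring
  -- hence g ≡ 0
  have hGz : ∀ s, deriv u s / KK p s + det2 v (p s) = 0 := by
    intro s
    have h1 := hW1z s
    have h2 := hW2z s
    have hdet := det2_p_q hP s
    simp only [det2] at hdet
    have key : (deriv u s / KK p s + det2 v (p s)) *
        ((p s).1 * (dualQ p s).2 - (p s).2 * (dualQ p s).1) = 0 := by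
      linear_combination (p s).1 * h1 - (p s).2 * h2
    rw [hdet, mul_one] at key
    exact key
  -- hence d ≡ 0
  have hdz : ∀ s, HasDerivAt (fun t => u t - U t) 0 s := by
    intro s
    have h := hd s
    rw [hGz s, mul_zero] at h
    exact h
  have hfinal := is_const_of_deriv_eq_zero (f := fun t => u t - U t)
    (fun x => (hdz x).differentiableAt) (fun x => (hdz x).deriv) θ θ₀
  rw [hd0] at hfinal
  have : u θ - U θ = 0 := hfinal
  have : u θ = U θ := by linarith
  rw [this]

end withP

end Stmt12Aux


/-- (i) for every `v ∈ ℝ²`, `θ ↦ [v, q(θ)]` solves the cycloid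
equation with `λ = 1`; (ii) every solution with `λ = 1` is given by the explicit
formula in terms of its initial data at `θ₀`, is anti-`π`-periodic together with
its derivative, and in particular `2π`-periodic (so `λ = 1` is a double eigenvalue). -/
theorem stmt_12 (p : ℝ → ℝ × ℝ) (hP : IsUnitCircle p) :
    (∀ v : ℝ × ℝ, IsCycloidSol p 1 (fun θ => det2 v (dualQ p θ))) ∧
    (∀ u : ℝ → ℝ, IsCycloidSol p 1 u →
      (∀ θ₀ θ, u θ = (det2 (dualQ p θ₀) (deriv (dualQ p) θ₀))⁻¹ *
        (det2 (dualQ p θ₀) (dualQ p θ) * deriv u θ₀ -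
          det2 (deriv (dualQ p) θ₀) (dualQ p θ) * u θ₀)) ∧
      (∀ θ, u (θ + π) = -u θ) ∧
      (∀ θ, deriv u (θ + π) = -(deriv u θ)) ∧
      (∀ θ, u (θ + 2 * π) = u θ)) := by
  constructor
  · exact fun v => Stmt12Aux.part_i hP v
  · intro u hu
    have hform : ∀ θ₀ θ, u θ = (det2 (dualQ p θ₀) (deriv (dualQ p) θ₀))⁻¹ *
        (det2 (dualQ p θ₀) (dualQ p θ) * deriv u θ₀ -
          det2 (deriv (dualQ p) θ₀) (dualQ p θ) * u θ₀) := by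
      intro θ₀ θ
      have h := Stmt12Aux.rep hP hu θ₀ θ
      rw [h]
      simp only [det2, Prod.smul_fst, Prod.smul_snd, Prod.fst_sub, Prod.snd_sub, smul_eq_mul]
      ring
    have hanti : ∀ θ, u (θ + π) = -u θ := by
      intro θ
      rw [Stmt12Aux.rep hP hu 0 (θ + π), Stmt12Aux.rep hP hu 0 θ, Stmt12Aux.q_anti hP θ]
      simp only [det2, Prod.fst_neg, Prod.snd_neg]
      ring
    have hdanti : ∀ θ, deriv u (θ + π) = -(deriv u θ) := by
      intro θ
      have hfun : (fun t => u (t + π)) = fun t => -u t := funext (fun t => hanti t)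
      calc deriv u (θ + π) = deriv (fun t => u (t + π)) θ := (deriv_comp_add_const u π θ).symm
        _ = deriv (fun t => -u t) θ := by rw [hfun]
        _ = -deriv u θ := deriv.neg
    refine ⟨hform, hanti, hdanti, fun θ => ?_⟩
    have h2 : θ + 2 * π = θ + π + π := by ring
    rw [h2, hanti, hanti, neg_neg]
end
end

section
/- Let f : ℝ → ℝ be differentiable and 2π-periodic, and let N ≥ 1 be an integer. If f has at least N distinct zeros in the interval [0, 2π), then f′ also has at least N distinct zeros in [0, 2π). -/
open Real MeasureTheory

noncomputable section

/-- periodic Rolle: if a differentiable `2π`-periodic function `f`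
has at least `N ≥ 1` distinct zeros in `[0, 2π)`, then `f'` also has at least `N`
distinct zeros in `[0, 2π)`. -/
theorem stmt_14 (f : ℝ → ℝ) (hf : Differentiable ℝ f)
    (hper : ∀ θ, f (θ + 2 * π) = f θ)
    (N : ℕ) (hN : 1 ≤ N)
    (S : Finset ℝ) (hS : ↑S ⊆ Set.Ico (0:ℝ) (2 * π))
    (hcard : N ≤ S.card) (hzero : ∀ θ ∈ S, f θ = 0) :
    ∃ T : Finset ℝ, ↑T ⊆ Set.Ico (0:ℝ) (2 * π) ∧ N ≤ T.card ∧
      ∀ θ ∈ T, deriv f θ = 0 := by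
  classical
  have hSne : S.Nonempty := Finset.card_pos.mp (lt_of_lt_of_le hN hcard)
  set M := S.max' hSne with hM
  set m := S.min' hSne with hm
  have hMmem : M ∈ S := S.max'_mem hSne
  have hmmem : m ∈ S := S.min'_mem hSne
  have hMlt : M < 2 * π := (hS hMmem).2
  have hm0 : (0:ℝ) ≤ m := (hS hmmem).1
  have hderper : ∀ x : ℝ, deriv f (x + 2 * π) = deriv f x := by
    intro x
    have h1 : (fun y => f (y + 2 * π)) = f := funext fun y => hper y
    calc deriv f (x + 2 * π) = deriv (fun y => f (y + 2 * π)) x :=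
          (deriv_comp_add_const f (2 * π) x).symm
      _ = deriv f x := by rw [h1]
  -- key existence
  have key : ∀ θ ∈ S, ∃ c, deriv f c = 0 ∧ c ∈ Set.Ico (0:ℝ) (2 * π) ∧
      ((θ ≠ M ∧ θ < c ∧ ∀ θ' ∈ S, θ < θ' → c < θ') ∨ (θ = M ∧ (M < c ∨ c < m))) := by
    intro θ hθ
    by_cases hθM : θ = M
    · -- wrap-around interval
      subst hθM
      have hlt : M < m + 2 * π := by linarith [hMlt, hm0]
      have hfI : f M = f (m + 2 * π) := by
        rw [hper m, hzero M hMmem, hzero m hmmem]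
      obtain ⟨c, hc, hc0⟩ := exists_deriv_eq_zero hlt (hf.continuous.continuousOn) hfI
      by_cases hc2 : c < 2 * π
      · exact ⟨c, hc0, ⟨le_trans (hS hMmem).1 hc.1.le, hc2⟩, Or.inr ⟨rfl, Or.inl hc.1⟩⟩
      · refine ⟨c - 2 * π, ?_, ⟨by linarith [not_lt.mp hc2], ?_⟩,
          Or.inr ⟨rfl, Or.inr ?_⟩⟩
        · rw [← hderper (c - 2 * π)]; simpa using hc0
        · have h2 := hc.2
          have hmM : m ≤ M := S.min'_le M hMmem
          linarith
        · have := hc.2; linarith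
    · -- interior interval: next zero
      have hθltM : θ < M := lt_of_le_of_ne (S.le_max' θ hθ) hθM
      have hne : (S.filter (fun x => θ < x)).Nonempty :=
        ⟨M, Finset.mem_filter.mpr ⟨hMmem, hθltM⟩⟩
      set t := (S.filter (fun x => θ < x)).min' hne with ht
      have htmem' := (S.filter (fun x => θ < x)).min'_mem hne
      have htS : t ∈ S := (Finset.mem_filter.mp htmem').1
      have hθt : θ < t := (Finset.mem_filter.mp htmem').2
      have hfI : f θ = f t := by rw [hzero θ hθ, hzero t htS]
      obtain ⟨c, hc, hc0⟩ := exists_deriv_eq_zero hθt (hf.continuous.continuousOn) hfI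
      refine ⟨c, hc0, ⟨le_trans (hS hθ).1 hc.1.le, lt_trans hc.2 (hS htS).2⟩,
        Or.inl ⟨hθM, hc.1, ?_⟩⟩
      intro θ' hθ' hθθ'
      exact lt_of_lt_of_le hc.2 (Finset.min'_le _ θ' (Finset.mem_filter.mpr ⟨hθ', hθθ'⟩))
  -- choice function
  choose! C hC1 hC2 hC3 using key
  refine ⟨S.image C, ?_, ?_, ?_⟩
  · intro x hx
    simp only [Finset.coe_image, Set.mem_image, Finset.mem_coe] at hx
    obtain ⟨θ, hθ, rfl⟩ := hx
    exact hC2 θ hθ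
  · calc N ≤ S.card := hcard
      _ = (S.image C).card := (Finset.card_image_of_injOn ?_).symm
    intro θ₁ h₁ θ₂ h₂ heq
    by_contra hne
    rw [Finset.mem_coe] at h₁ h₂
    -- WLOG via case analysis
    have main : ∀ a ∈ S, ∀ b ∈ S, a ≠ b → a ≠ M → C a ≠ C b := by
      intro a ha b hb hab haM
      rcases hC3 a ha with ⟨_, hac, hall⟩ | ⟨h, _⟩
      · rcases hC3 b hb with ⟨hbM, hbc, hball⟩ | ⟨hbM, hMc⟩
        · rcases lt_or_gt_of_ne hab with h | h
          · exact ne_of_lt (lt_trans (hall b hb h) hbc)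
          · exact ne_of_gt (lt_trans (hball a ha h) hac)
        · subst hbM
          have haltM : a < M := lt_of_le_of_ne (S.le_max' a ha) haM
          have hcaM : C a < M := hall M hMmem haltM
          rcases hMc with h | h
          · exact ne_of_lt (lt_trans hcaM h)
          · exact ne_of_gt (lt_of_lt_of_le h (le_trans (S.min'_le a ha) hac.le))
      · exact absurd h haM
    rcases eq_or_ne θ₁ M with h1M | h1M
    · rcases eq_or_ne θ₂ M with h2M | h2M
      · exact hne (h1M.trans h2M.symm)
      · exact main θ₂ h₂ θ₁ h₁ (Ne.symm hne) h2M heq.symm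
    · exact main θ₁ h₁ θ₂ h₂ hne h1M heq
  · intro θ hθ
    obtain ⟨θ', hθ', rfl⟩ := Finset.mem_image.mp hθ
    exact hC1 θ' hθ'
end
end
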